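/- Let G be a connected simple graph of order n ≥ 4 with maximum degree Δ(G). Then the distinguishing number of the central graph satisfies D(C(G)) ≤ ⌈√Δ(G)⌉. -/

import Mathlib

open SimpleGraph

/-- The subdivision graph `S(G)`: each edge `{u,v}` of `G` is replaced by a new
vertex (the element of `G.edgeSet`) adjacent to both `u` and `v`. -/
def subdivisionGraph {V : Type*} (G : SimpleGraph V) : SimpleGraph (V ⊕ G.edgeSet) where
  Adj x y :=
    match x, y with
    | Sum.inl u, Sum.inr e => u ∈ (e : Sym2 V)
    | Sum.inr e, Sum.inl u => u ∈ (e : Sym2 V)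
    | _, _ => False
  symm := by constructor; rintro (u | e) (v | f) h <;> simp_all
  loopless := by constructor; rintro (u | e) h <;> simp_all

/-- The central graph `C(G)`: obtained from the subdivision graph `S(G)` by joining
every pair of distinct vertices of `G` that are non-adjacent in `G`. -/
def centralGraph {V : Type*} (G : SimpleGraph V) : SimpleGraph (V ⊕ G.edgeSet) where
  Adj x y :=
    match x, y with
    | Sum.inl u, Sum.inl v => u ≠ v ∧ ¬ G.Adj u v
    | Sum.inl u, Sum.inr e => u ∈ (e : Sym2 V)
    | Sum.inr e, Sum.inl u => u ∈ (e : Sym2 V)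
    | Sum.inr _, Sum.inr _ => False
  symm := by
    constructor
    rintro (u | e) (v | f) h
    · exact ⟨h.1.symm, fun a => h.2 a.symm⟩
    · exact h
    · exact h
    · exact h
  loopless := by
    constructor
    rintro (u | e) h
    · exact h.1 rfl
    · exact h

/-- The middle graph `M(G)`: obtained from the subdivision graph `S(G)` by joining
each pair of distinct subdivided vertices corresponding to adjacent edges of `G`. -/
def middleGraph {V : Type*} (G : SimpleGraph V) : SimpleGraph (V ⊕ G.edgeSet) where
  Adj x y :=
    match x, y with
    | Sum.inl u, Sum.inr e => u ∈ (e : Sym2 V)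
    | Sum.inr e, Sum.inl u => u ∈ (e : Sym2 V)
    | Sum.inr e, Sum.inr f => e ≠ f ∧ ∃ u, u ∈ (e : Sym2 V) ∧ u ∈ (f : Sym2 V)
    | Sum.inl _, Sum.inl _ => False
  symm := by
    constructor
    rintro (u | e) (v | f) h
    · exact h
    · exact h
    · exact h
    · exact ⟨h.1.symm, h.2.imp fun u hu => ⟨hu.2, hu.1⟩⟩
  loopless := by
    constructor
    rintro (u | e) h
    · exact h
    · exact h.1 rfl

/-- The line graph `L(G)`: vertices are the edges of `G`, two distinct edges being
adjacent when they share an endpoint. -/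
def lineG {V : Type*} (G : SimpleGraph V) : SimpleGraph G.edgeSet where
  Adj e f := e ≠ f ∧ ∃ u, u ∈ (e : Sym2 V) ∧ u ∈ (f : Sym2 V)
  symm := ⟨fun e f h => ⟨h.1.symm, h.2.imp fun u hu => ⟨hu.2, hu.1⟩⟩⟩
  loopless := ⟨fun e h => h.1 rfl⟩

/-- The endline graph `G⁺`: to each vertex `v` of `G` we attach a new pendant
vertex; `Sum.inl` is the copy of `V(G)` and `Sum.inr` are the new vertices. -/
def endlineGraph {V : Type*} (G : SimpleGraph V) : SimpleGraph (V ⊕ V) where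
  Adj x y :=
    match x, y with
    | Sum.inl u, Sum.inl v => G.Adj u v
    | Sum.inl u, Sum.inr v => u = v
    | Sum.inr u, Sum.inl v => u = v
    | Sum.inr _, Sum.inr _ => False
  symm := by
    constructor
    rintro (u | u) (v | v) h
    · exact h.symm
    · exact h.symm
    · exact h.symm
    · exact h
  loopless := by
    constructor
    rintro (u | u) h
    · exact G.irrefl h
    · exact h

/-- The join `G₁ + G₂` of two vertex-disjoint graphs: their disjoint union together
with all edges between the two vertex sets. -/
def joinGraph {V₁ V₂ : Type*} (G₁ : SimpleGraph V₁) (G₂ : SimpleGraph V₂) :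
    SimpleGraph (V₁ ⊕ V₂) where
  Adj x y :=
    match x, y with
    | Sum.inl u, Sum.inl v => G₁.Adj u v
    | Sum.inr u, Sum.inr v => G₂.Adj u v
    | Sum.inl _, Sum.inr _ => True
    | Sum.inr _, Sum.inl _ => True
  symm := by
    constructor
    rintro (u | u) (v | v) h
    · exact h.symm
    · trivial
    · trivial
    · exact h.symm
  loopless := by
    constructor
    rintro (u | u) h
    · exact G₁.irrefl h
    · exact G₂.irrefl h

/-- The maximum degree `Δ(H)` of a graph (as a supremum of cardinalities of
neighborhoods, which agrees with the usual maximum degree for finite graphs). -/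
noncomputable def maxDeg {W : Type*} (H : SimpleGraph W) : ℕ :=
  sSup {k | ∃ v : W, k = (H.neighborSet v).ncard}

/-- A graph is regular if all vertices have the same degree. -/
def IsRegularGraph {W : Type*} (H : SimpleGraph W) : Prop :=
  ∀ u v : W, (H.neighborSet u).ncard = (H.neighborSet v).ncard

/-- The distinguishing number `D(H)`: the least `d` such that `H` admits a vertex
coloring with `d` colors preserved only by the identity automorphism. -/
noncomputable def distinguishingNumber {W : Type*} (H : SimpleGraph W) : ℕ :=
  sInf {d | ∃ c : W → Fin d, ∀ φ : H ≃g H, (∀ v, c (φ v) = c v) → ∀ v, φ v = v}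

/-- The distinguishing index `D'(H)`: the least `d` such that `H` admits an edge
coloring with `d` colors preserved only by the identity automorphism. -/
noncomputable def distinguishingIndex {W : Type*} (H : SimpleGraph W) : ℕ :=
  sInf {d | ∃ c : H.edgeSet → Fin d,
    ∀ φ : H ≃g H, (∀ e, c (φ.mapEdgeSet e) = c e) → ∀ v, φ v = v}

/-- A proper total coloring of `H` with `d` colors: adjacent vertices, adjacent
edges, and incident vertex/edge pairs receive distinct colors. -/
def IsProperTotalColoring {W : Type*} (H : SimpleGraph W) {d : ℕ}
    (f : W ⊕ H.edgeSet → Fin d) : Prop :=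
  (∀ u v : W, H.Adj u v → f (Sum.inl u) ≠ f (Sum.inl v)) ∧
  (∀ e e' : H.edgeSet, e ≠ e' → (∃ u, u ∈ (e : Sym2 W) ∧ u ∈ (e' : Sym2 W)) →
    f (Sum.inr e) ≠ f (Sum.inr e')) ∧
  (∀ (v : W) (e : H.edgeSet), v ∈ (e : Sym2 W) → f (Sum.inl v) ≠ f (Sum.inr e))

/-- An automorphism `φ` preserves a total coloring `f`. -/
def PreservesTotalColoring {W : Type*} (H : SimpleGraph W) {d : ℕ}
    (f : W ⊕ H.edgeSet → Fin d) (φ : H ≃g H) : Prop :=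
  (∀ v : W, f (Sum.inl (φ v)) = f (Sum.inl v)) ∧
  (∀ e : H.edgeSet, f (Sum.inr (φ.mapEdgeSet e)) = f (Sum.inr e))

/-- The total chromatic number `χ''(H)`. -/
noncomputable def totalChromaticNumber {W : Type*} (H : SimpleGraph W) : ℕ :=
  sInf {d | ∃ f : W ⊕ H.edgeSet → Fin d, IsProperTotalColoring H f}

/-- The total distinguishing chromatic number `χ''_D(H)`: the least `d` such that
`H` has a proper total coloring with `d` colors preserved only by the identity. -/
noncomputable def totalDistinguishingChromaticNumber {W : Type*} (H : SimpleGraph W) : ℕ :=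
  sInf {d | ∃ f : W ⊕ H.edgeSet → Fin d, IsProperTotalColoring H f ∧
    ∀ φ : H ≃g H, PreservesTotalColoring H f φ → ∀ v, φ v = v}

/-- The color class `C_H(u)` of a vertex under a total coloring: the color of `u`
together with the colors of the edges incident to `u`. -/
def totalColorClass {W : Type*} (H : SimpleGraph W) {d : ℕ}
    (f : W ⊕ H.edgeSet → Fin d) (u : W) : Set (Fin d) :=
  {f (Sum.inl u)} ∪ {x | ∃ e : H.edgeSet, u ∈ (e : Sym2 W) ∧ x = f (Sum.inr e)}

/-- An AVD-total coloring: a proper total coloring in which adjacent vertices have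
distinct color classes. -/
def IsAVDTotalColoring {W : Type*} (H : SimpleGraph W) {d : ℕ}
    (f : W ⊕ H.edgeSet → Fin d) : Prop :=
  IsProperTotalColoring H f ∧
  ∀ u v : W, H.Adj u v → totalColorClass H f u ≠ totalColorClass H f v

/-- The AVD-total chromatic number `χ''ₐ(H)`. -/
noncomputable def avdTotalChromaticNumber {W : Type*} (H : SimpleGraph W) : ℕ :=
  sInf {d | ∃ f : W ⊕ H.edgeSet → Fin d, IsAVDTotalColoring H f}

/-- A total dominator coloring: a proper vertex coloring such that every vertex is
adjacent to every vertex of some (nonempty) color class. -/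
def IsTotalDominatorColoring {W : Type*} (H : SimpleGraph W) {d : ℕ}
    (c : W → Fin d) : Prop :=
  (∀ u v : W, H.Adj u v → c u ≠ c v) ∧
  (∀ v : W, ∃ i : Fin d, (∃ w, c w = i) ∧ ∀ w, c w = i → H.Adj v w)

/-- The total dominator chromatic number `χᵗ_d(H)`. -/
noncomputable def tdChromaticNumber {W : Type*} (H : SimpleGraph W) : ℕ :=
  sInf {d | ∃ c : W → Fin d, IsTotalDominatorColoring H c}

/-!
Every automorphism of `C(G)` maps vertices of `G` to vertices of `G`: in `C(G)` they have degree
at least `n - 1 ≥ 3`, while subdivision vertices have degree `2`. Hence the automorphisms of `C(G)`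
are those of `G` acting on vertices and edges, and a colouring of `C(G)` is a colouring of the
vertices and edges of `G`.

Let `r` be a vertex of maximum degree `Δ` and `d = ⌈√Δ⌉`, so `Δ ≤ d²`. Colour along a BFS tree
rooted at `r`, giving each non-root vertex the pair (colour of the edge to its parent, its own
colour), distinct among siblings. An automorphism preserving the colouring and fixing `r` fixes
every vertex, level by level. The root is fixed because it is the only vertex showing a certain
colour pattern; the pattern depends on whether `Δ ≤ d + 1`.
-/

open Set

theorem Set.exists_injOn_subset_image {α β : Type*} [Finite β] [Nonempty β] {s : Set α}
    {u : Set β} (hs : s.Finite) (hus : u.ncard ≤ s.ncard) (hsβ : s.ncard ≤ Nat.card β) :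
    ∃ f : α → β, InjOn f s ∧ u ⊆ f '' s := by
  obtain ⟨w, huw, -, hw⟩ := exists_subsuperset_card_eq (subset_univ u) hus
    (by rwa [ncard_univ])
  obtain ⟨f, hf⟩ := hs.exists_bijOn_of_encard_eq (t := w) (by
    rw [← hs.cast_ncard_eq, ← (toFinite w).cast_ncard_eq, hw])
  exact ⟨f, hf.injOn, hf.image_eq ▸ huw⟩

theorem Nat.le_ceil_sqrt_sq (n : ℕ) : n ≤ ⌈√(n : ℝ)⌉₊ ^ 2 := by
  have h : (n : ℝ) ≤ (⌈√(n : ℝ)⌉₊ : ℝ) ^ 2 :=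
    calc (n : ℝ) = √(n : ℝ) ^ 2 := (Real.sq_sqrt n.cast_nonneg).symm
      _ ≤ _ := pow_le_pow_left₀ (Real.sqrt_nonneg _) (Nat.le_ceil _) 2
  exact_mod_cast h

namespace SimpleGraph

variable {V : Type*} {G : SimpleGraph V}

def incidencePair {α β : Type*} (cV : V → α) (cE : Sym2 V → β) (p x : V) : β × α :=
  (cE s(p, x), cV x)

def IsTotalDistinguishing {α β : Type*} (G : SimpleGraph V) (cV : V → α) (cE : Sym2 V → β) :
    Prop :=
  ∀ σ : G ≃g G, (∀ v, cV (σ v) = cV v) → (∀ u v, G.Adj u v → cE s(σ u, σ v) = cE s(u, v)) →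
    ∀ v, σ v = v

theorem Iso.ncard_neighborSet_apply (σ : G ≃g G) (v : V) :
    (G.neighborSet (σ v)).ncard = (G.neighborSet v).ncard := by
  rw [← Nat.card_coe_set_eq, ← Nat.card_coe_set_eq, Nat.card_congr (σ.mapNeighborSet v)]

theorem Iso.dist_apply (hconn : G.Connected) (σ : G ≃g G) (u v : V) :
    G.dist (σ u) (σ v) = G.dist u v := by
  have key : ∀ (τ : G ≃g G) (a b : V), G.dist (τ a) (τ b) ≤ G.dist a b := fun τ a b => by
    obtain ⟨w, hw⟩ := hconn.exists_walk_length_eq_dist a b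
    simpa [hw] using dist_le (w.map τ.toHom)
  refine (key σ u v).antisymm ?_
  simpa using key σ.symm (σ u) (σ v)

theorem Iso.injOn_incidencePair_apply {α β : Type*} (σ : G ≃g G) {cV : V → α} {cE : Sym2 V → β}
    (hV : ∀ v, cV (σ v) = cV v) (hE : ∀ u v, G.Adj u v → cE s(σ u, σ v) = cE s(u, v)) {v : V}
    (h : InjOn (incidencePair cV cE v) (G.neighborSet v)) :
    InjOn (incidencePair cV cE (σ v)) (G.neighborSet (σ v)) := by
  intro x hx y hy hxy
  obtain ⟨x, rfl⟩ := σ.surjective x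
  obtain ⟨y, rfl⟩ := σ.surjective y
  rw [mem_neighborSet, σ.map_adj_iff] at hx hy
  simp only [incidencePair, hE _ _ hx, hE _ _ hy, hV] at hxy
  rw [h hx hy hxy]

theorem Connected.exists_two_le_ncard_neighborSet [Finite V] (hconn : G.Connected)
    (hn : 3 ≤ Nat.card V) : ∃ v, 2 ≤ (G.neighborSet v).ncard := by
  classical
  have := Fintype.ofFinite V
  by_contra! h
  have hdeg : ∀ v, G.degree v ≤ 1 := fun v => by
    have := h v
    rw [ncard_eq_toFinset_card', ← neighborFinset_def, card_neighborFinset_eq_degree] at this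
    omega
  -- handshake: `2 |E| = ∑ deg ≤ |V| ≤ |E| + 1`
  have hsum : 2 * Nat.card G.edgeSet ≤ Nat.card V := by
    rw [Nat.card_eq_fintype_card, ← edgeFinset_card, ← sum_degrees_eq_twice_card_edges,
      Nat.card_eq_fintype_card]
    simpa using Finset.sum_le_sum fun v (_ : v ∈ Finset.univ) => hdeg v
  have := hconn.card_vert_le_card_edgeSet_add_one
  omega

section BFS

variable (G) (r : V)

def parentCandidates (v : V) : Set V := {x | G.Adj v x ∧ G.dist r x + 1 = G.dist r v}

open scoped Classical in
noncomputable def bfsParent (v : V) : V :=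
  if h : (G.parentCandidates r v).Nonempty then h.some else v

def bfsChildren (p : V) : Set V := {x | p ∈ G.parentCandidates r x ∧ G.bfsParent r x = p}

variable {G r} {p v x : V}

theorem bfsParent_mem (h : (G.parentCandidates r v).Nonempty) :
    G.bfsParent r v ∈ G.parentCandidates r v := by
  rw [bfsParent, dif_pos h]
  exact h.some_mem

theorem dist_bfsParent_lt (h : (G.parentCandidates r v).Nonempty) :
    G.dist r (G.bfsParent r v) < G.dist r v := by
  have := (bfsParent_mem h).2
  omega

theorem dist_bfsParent_le (v : V) : G.dist r (G.bfsParent r v) ≤ G.dist r v := by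
  by_cases h : (G.parentCandidates r v).Nonempty
  · exact (dist_bfsParent_lt h).le
  · rw [bfsParent, dif_neg h]

theorem bfsParent_congr {w : V} (h : G.parentCandidates r v = G.parentCandidates r w)
    (hne : (G.parentCandidates r v).Nonempty) : G.bfsParent r v = G.bfsParent r w := by
  rw [bfsParent, bfsParent, dif_pos hne, dif_pos (h ▸ hne)]
  simp only [h]

theorem parentCandidates_nonempty (hconn : G.Connected) (hv : v ≠ r) :
    (G.parentCandidates r v).Nonempty := by
  obtain ⟨w, hw⟩ := hconn.exists_walk_length_eq_dist v r
  cases w with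
  | nil => exact absurd rfl hv
  | cons hadj q =>
    refine ⟨_, hadj, ?_⟩
    have hq := dist_le q
    have hpos : G.dist r v ≠ 0 := fun h => hv ((hconn.dist_eq_zero_iff.mp h).symm)
    rw [Walk.length_cons, dist_comm] at hw
    rw [dist_comm] at hq
    rcases hadj.diff_dist_adj (u := r) with h | h | h <;> omega

theorem adj_of_mem_bfsChildren (hx : x ∈ G.bfsChildren r p) : G.Adj p x := hx.1.1.symm

theorem dist_of_mem_bfsChildren (hx : x ∈ G.bfsChildren r p) :
    G.dist r p + 1 = G.dist r x := hx.1.2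

theorem notMem_bfsChildren_of_mem (hx : x ∈ G.bfsChildren r p) : p ∉ G.bfsChildren r x :=
  fun hp => by have := dist_of_mem_bfsChildren hx; have := dist_of_mem_bfsChildren hp; omega

theorem mem_bfsChildren_bfsParent (hconn : G.Connected) (hv : v ≠ r) :
    v ∈ G.bfsChildren r (G.bfsParent r v) :=
  ⟨bfsParent_mem (parentCandidates_nonempty hconn hv), rfl⟩

theorem bfsChildren_subset_neighborSet : G.bfsChildren r p ⊆ G.neighborSet p :=
  fun _ hx => adj_of_mem_bfsChildren hx

theorem bfsChildren_root (hconn : G.Connected) : G.bfsChildren r r = G.neighborSet r := by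
  refine bfsChildren_subset_neighborSet.antisymm fun x (hx : G.Adj r x) => ?_
  have hr : r ∈ G.parentCandidates r x := ⟨hx.symm, by simp [dist_eq_one_iff_adj.mpr hx]⟩
  refine ⟨hr, ?_⟩
  have := (bfsParent_mem ⟨r, hr⟩).2
  rw [dist_eq_one_iff_adj.mpr hx] at this
  exact (hconn.dist_eq_zero_iff.mp (by omega)).symm

theorem ncard_bfsChildren_lt [Finite V] (hconn : G.Connected) (hp : p ≠ r) :
    (G.bfsChildren r p).ncard < (G.neighborSet p).ncard := by
  have hpp := mem_bfsChildren_bfsParent hconn hp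
  refine ncard_lt_ncard ((ssubset_iff_of_subset bfsChildren_subset_neighborSet).mpr
    ⟨_, (adj_of_mem_bfsChildren hpp).symm, notMem_bfsChildren_of_mem hpp⟩)

theorem Iso.eq_self_of_injOn_bfsChildren {α β : Type*} (hconn : G.Connected) (σ : G ≃g G)
    (hσ : σ r = r) {cV : V → α} {cE : Sym2 V → β} (hV : ∀ v, cV (σ v) = cV v)
    (hE : ∀ u v, G.Adj u v → cE s(σ u, σ v) = cE s(u, v))
    (hinj : ∀ p, InjOn (incidencePair cV cE p) (G.bfsChildren r p)) (v : V) :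
    σ v = v := by
  induction hn : G.dist r v using Nat.strong_induction_on generalizing v with
  | _ n ih =>
  rcases eq_or_ne v r with rfl | hv
  · exact hσ
  have hlow : ∀ x, G.dist r x < G.dist r v → σ x = x := fun x hx => ih _ (hn ▸ hx) x rfl
  have hdist : G.dist r (σ v) = G.dist r v := by simpa [hσ] using σ.dist_apply hconn r v
  have hσv : σ v ≠ r := fun h => hv (σ.injective (h.trans hσ.symm))
  have hcand : G.parentCandidates r (σ v) = G.parentCandidates r v := by
    ext x
    simp only [parentCandidates, mem_ofPred_eq, hdist]
    constructor <;> rintro ⟨hadj, hx⟩ <;> refine ⟨?_, hx⟩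
    · rwa [← hlow x (by omega), σ.map_adj_iff] at hadj
    · rwa [← hlow x (by omega), σ.map_adj_iff]
  have hv_mem := mem_bfsChildren_bfsParent hconn hv
  have hσv_mem := mem_bfsChildren_bfsParent hconn hσv
  rw [bfsParent_congr hcand (parentCandidates_nonempty hconn hσv)] at hσv_mem
  have hp : σ (G.bfsParent r v) = G.bfsParent r v :=
    hlow _ (by have := dist_of_mem_bfsChildren hv_mem; omega)
  refine hinj _ hσv_mem hv_mem (Prod.ext ?_ (hV v))
  rw [incidencePair, incidencePair, ← hE _ v (adj_of_mem_bfsChildren hv_mem), hp]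

end BFS

section Labelling

variable {α : Type*} (G) (r : V)

open scoped Classical in
/-- A labelling `lab` of the BFS tree gives the vertex `x` the colour `(lab x).2` and the tree
edge from `x` to its parent the colour `(lab x).1`; all other edges get the colour `a`. -/
noncomputable def labelEdgeColor (lab : V → α × α) (a : α) : Sym2 V → α :=
  Sym2.lift ⟨fun u v => if v ∈ G.bfsChildren r u then (lab v).1
    else if u ∈ G.bfsChildren r v then (lab u).1 else a, fun u v => by
      by_cases h₁ : v ∈ G.bfsChildren r u
      · simp [h₁, notMem_bfsChildren_of_mem h₁]
      · by_cases h₂ : u ∈ G.bfsChildren r v <;> simp [h₁, h₂]⟩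

open scoped Classical in
/-- A child `x` of `p` is labelled `rule p t x`, where `t` is the incidence pair of the parent
of `p` as seen from `p`: the colour of the edge between them and the colour of that parent. -/
noncomputable def bfsLabel (rule : V → α × α → V → α × α) (x₀ : α × α) (v : V) : α × α :=
  if _h : (G.parentCandidates r v).Nonempty then
    rule (G.bfsParent r v)
      ((bfsLabel rule x₀ (G.bfsParent r v)).1,
        (bfsLabel rule x₀ (G.bfsParent r (G.bfsParent r v))).2) v
  else x₀
termination_by G.dist r v
decreasing_by
  · exact dist_bfsParent_lt _h
  · exact (dist_bfsParent_le _).trans_lt (dist_bfsParent_lt _h)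

variable {G r} {lab : V → α × α} {a : α} {p v x : V}

theorem labelEdgeColor_of_mem_bfsChildren (hx : x ∈ G.bfsChildren r p) :
    G.labelEdgeColor r lab a s(p, x) = (lab x).1 := by
  simp [labelEdgeColor, hx]

theorem labelEdgeColor_of_notMem (h₁ : x ∉ G.bfsChildren r p) (h₂ : p ∉ G.bfsChildren r x) :
    G.labelEdgeColor r lab a s(p, x) = a := by
  simp [labelEdgeColor, h₁, h₂]

theorem incidencePair_of_mem_bfsChildren (hx : x ∈ G.bfsChildren r p) :
    incidencePair (fun v => (lab v).2) (G.labelEdgeColor r lab a) p x = lab x := by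
  rw [incidencePair, labelEdgeColor_of_mem_bfsChildren hx]

theorem bfsLabel_of_mem_bfsChildren {rule : V → α × α → V → α × α} {x₀ : α × α}
    (hx : x ∈ G.bfsChildren r p) :
    G.bfsLabel r rule x₀ x = rule p ((G.bfsLabel r rule x₀ p).1,
      (G.bfsLabel r rule x₀ (G.bfsParent r p)).2) x := by
  rw [bfsLabel, dif_pos ⟨p, hx.1⟩, hx.2]

theorem injOn_incidencePair_labelEdgeColor {p : V} (hinj : InjOn lab (G.bfsChildren r p)) :
    InjOn (incidencePair (fun v => (lab v).2) (G.labelEdgeColor r lab a) p)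
      (G.bfsChildren r p) :=
  hinj.congr fun _ hx => (incidencePair_of_mem_bfsChildren hx).symm

theorem eq_bfsParent_of_labelEdgeColor_eq {a' : α} {x : V} (hne : a' ≠ a)
    (hchild : ∀ y ∈ G.bfsChildren r v, (lab y).1 = a)
    (hx : G.labelEdgeColor r lab a s(v, x) = a') : x = G.bfsParent r v := by
  by_cases h₁ : x ∈ G.bfsChildren r v
  · rw [labelEdgeColor_of_mem_bfsChildren h₁, hchild x h₁] at hx
    exact absurd hx.symm hne
  by_cases h₂ : v ∈ G.bfsChildren r x
  · exact h₂.2.symm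
  · exact absurd (labelEdgeColor_of_notMem h₁ h₂ ▸ hx).symm hne

theorem not_injOn_incidencePair_labelEdgeColor [Finite V] [Finite α] (hconn : G.Connected)
    (hecho : ∀ p, (G.bfsChildren r p).Nonempty →
      ∃ x ∈ G.bfsChildren r p, lab x = ((lab p).1, (lab (G.bfsParent r p)).2))
    (hv : v ≠ r) (hdeg : Nat.card α + 1 < (G.neighborSet v).ncard) :
    ¬ InjOn (incidencePair (fun v => (lab v).2) (G.labelEdgeColor r lab a) v)
      (G.neighborSet v) := by
  intro hinj
  have hvp := mem_bfsChildren_bfsParent hconn hv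
  have hpv : G.Adj v (G.bfsParent r v) := (adj_of_mem_bfsChildren hvp).symm
  rcases (G.bfsChildren r v).eq_empty_or_nonempty with hempty | hne
  · have hdefault : ∀ z ∈ G.neighborSet v \ {G.bfsParent r v},
        G.labelEdgeColor r lab a s(v, z) = a := fun z hz =>
      labelEdgeColor_of_notMem (hempty ▸ notMem_empty z) fun h => hz.2 h.2.symm
    obtain ⟨x, hx, y, hy, hxy, hcol⟩ := exists_ne_map_eq_of_ncard_lt_of_maps_to
      (t := (univ : Set α)) (f := fun v => (lab v).2)
      (by rw [ncard_univ, ncard_sdiff_singleton_of_mem (show _ ∈ G.neighborSet v from hpv)]; omega)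
      fun _ _ => mem_univ _
    exact hxy (hinj hx.1 hy.1 (by simp only [incidencePair, hdefault x hx, hdefault y hy, hcol]))
  · obtain ⟨x, hx, hlab⟩ := hecho v hne
    have hxp : x ≠ G.bfsParent r v := fun h => notMem_bfsChildren_of_mem hvp (h ▸ hx)
    refine hxp (hinj (adj_of_mem_bfsChildren hx) hpv ?_)
    rw [incidencePair_of_mem_bfsChildren hx, hlab, incidencePair, Sym2.eq_swap,
      labelEdgeColor_of_mem_bfsChildren hvp]

end Labelling

section Construction

variable [Finite V] {α : Type*} [Finite α] {r : V}

theorem exists_bfsLabel_of_le_card_add_one (hconn : G.Connected)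
    (hmax : ∀ v, (G.neighborSet v).ncard ≤ (G.neighborSet r).ncard)
    (h2 : 2 ≤ (G.neighborSet r).ncard) (hsmall : (G.neighborSet r).ncard ≤ Nat.card α + 1)
    {a₀ a₁ : α} (hne : a₀ ≠ a₁) :
    ∃ lab : V → α × α, (∀ p, InjOn lab (G.bfsChildren r p)) ∧
      (∃ x ∈ G.bfsChildren r r, ∃ y ∈ G.bfsChildren r r,
        x ≠ y ∧ (lab x).1 = a₀ ∧ (lab y).1 = a₀) ∧
      ∀ p ≠ r, ∀ x ∈ G.bfsChildren r p, (lab x).1 = a₁ := by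
  have : Nonempty α := ⟨a₀⟩
  have hcard : 1 < Nat.card α := Finite.one_lt_card_iff_nontrivial.mpr ⟨a₀, a₁, hne⟩
  obtain ⟨f, hf, hfimg⟩ : ∃ f : V → α × α, InjOn f (G.bfsChildren r r) ∧
      {(a₀, a₀), (a₀, a₁)} ⊆ f '' G.bfsChildren r r :=
    exists_injOn_subset_image (toFinite _)
      (by rwa [ncard_pair (by simp [hne]), bfsChildren_root hconn])
      (by rw [bfsChildren_root hconn, Nat.card_prod]; nlinarith)
  have hg : ∀ p ≠ r, ∃ g : V → α, InjOn g (G.bfsChildren r p) := fun p hp => by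
    obtain ⟨g, hg, -⟩ := exists_injOn_subset_image (s := G.bfsChildren r p) (u := (∅ : Set α))
      (toFinite _) (by simp) (by have := ncard_bfsChildren_lt hconn hp; have := hmax p; omega)
    exact ⟨g, hg⟩
  choose! g hg using hg
  classical
  let F : V → V → α × α := fun p => if p = r then f else fun x => (a₁, g p x)
  have hF : ∀ p, InjOn (F p) (G.bfsChildren r p) := fun p => by
    by_cases hp : p = r
    · subst hp; simpa [F] using hf
    · simpa [F, hp, InjOn] using hg p hp
  obtain ⟨⟨x, hx, hfx⟩, hy⟩ := insert_subset_iff.mp hfimg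
  obtain ⟨y, hy, hfy⟩ := singleton_subset_iff.mp hy
  refine ⟨fun x => F (G.bfsParent r x) x, fun p => (hF p).congr fun x hx => by rw [hx.2],
    ⟨x, hx, y, hy, fun h => hne (by simp_all), ?_⟩, fun p hp x hx => by simp [F, hx.2, hp]⟩
  simp [F, hx.2, hy.2, hfx, hfy]

theorem exists_bfsLabel_echo [Nonempty α]
    (hmax : ∀ v, (G.neighborSet v).ncard ≤ (G.neighborSet r).ncard)
    (hα : (G.neighborSet r).ncard ≤ Nat.card α ^ 2) :
    ∃ lab : V → α × α, (∀ p, InjOn lab (G.bfsChildren r p)) ∧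
      ∀ p, (G.bfsChildren r p).Nonempty →
        ∃ x ∈ G.bfsChildren r p, lab x = ((lab p).1, (lab (G.bfsParent r p)).2) := by
  have hrule : ∀ p (t : α × α), ∃ f : V → α × α, InjOn f (G.bfsChildren r p) ∧
      ((G.bfsChildren r p).Nonempty → t ∈ f '' G.bfsChildren r p) := by
    intro p t
    have hcard : (G.bfsChildren r p).ncard ≤ Nat.card (α × α) := by
      rw [Nat.card_prod, ← sq]
      exact (ncard_le_ncard bfsChildren_subset_neighborSet).trans ((hmax p).trans hα)
    by_cases hne : (G.bfsChildren r p).Nonempty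
    · obtain ⟨f, hf, ht⟩ := exists_injOn_subset_image (u := {t}) (toFinite _)
        (by rw [ncard_singleton]; exact (ncard_pos (toFinite _)).mpr hne) hcard
      exact ⟨f, hf, fun _ => ht rfl⟩
    · obtain ⟨f, hf, -⟩ :=
        exists_injOn_subset_image (u := (∅ : Set (α × α))) (toFinite _) (by simp) hcard
      exact ⟨f, hf, fun h => absurd h hne⟩
  choose rule hinj hecho using hrule
  refine ⟨G.bfsLabel r rule (Classical.arbitrary _),
    fun p => (hinj p _).congr fun x hx => (bfsLabel_of_mem_bfsChildren hx).symm, fun p hp => ?_⟩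
  obtain ⟨x, hx, hxt⟩ := hecho p _ hp
  exact ⟨x, hx, (bfsLabel_of_mem_bfsChildren hx).trans hxt⟩

/-- Here the root is the only vertex with two incident edges of colour `a₀`: elsewhere only the
edge to the parent can have it, as the at most `Δ - 1 ≤ |α|` children of a non-root vertex can all
be labelled `(a₁, _)`. -/
theorem exists_isTotalDistinguishing_of_le_card_add_one (hconn : G.Connected)
    (hmax : ∀ v, (G.neighborSet v).ncard ≤ (G.neighborSet r).ncard)
    (h2 : 2 ≤ (G.neighborSet r).ncard) (hsmall : (G.neighborSet r).ncard ≤ Nat.card α + 1)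
    {a₀ a₁ : α} (hne : a₀ ≠ a₁) :
    ∃ (cV : V → α) (cE : Sym2 V → α), G.IsTotalDistinguishing cV cE := by
  obtain ⟨lab, hinj, ⟨x, hx, y, hy, hxy, hx₀, hy₀⟩, hchild⟩ :=
    exists_bfsLabel_of_le_card_add_one hconn hmax h2 hsmall hne
  refine ⟨fun v => (lab v).2, G.labelEdgeColor r lab a₁, fun σ hV hE =>
    σ.eq_self_of_injOn_bfsChildren hconn ?_ hV hE fun p =>
      injOn_incidencePair_labelEdgeColor (hinj p)⟩
  by_contra hσr
  have key : ∀ z ∈ G.bfsChildren r r, (lab z).1 = a₀ → σ z = G.bfsParent r (σ r) :=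
    fun z hz hz₀ => eq_bfsParent_of_labelEdgeColor_eq hne (hchild _ hσr) (by
      rw [hE _ _ (adj_of_mem_bfsChildren hz), labelEdgeColor_of_mem_bfsChildren hz, hz₀])
  exact hxy (σ.injective ((key x hx hx₀).trans (key y hy hy₀).symm))

/-- Here the root is the only vertex of maximum degree at which the incidence pairs of all
neighbours are distinct: elsewhere one child echoes the incidence pair of the parent or, if there
are no children, the `Δ - 1 > |α|` non-tree edges all have the default colour. -/
theorem exists_isTotalDistinguishing_of_card_add_one_lt (hconn : G.Connected)
    (hmax : ∀ v, (G.neighborSet v).ncard ≤ (G.neighborSet r).ncard)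
    (hα : (G.neighborSet r).ncard ≤ Nat.card α ^ 2)
    (hlarge : Nat.card α + 1 < (G.neighborSet r).ncard) (a : α) :
    ∃ (cV : V → α) (cE : Sym2 V → α), G.IsTotalDistinguishing cV cE := by
  have : Nonempty α := ⟨a⟩
  obtain ⟨lab, hinj, hecho⟩ := exists_bfsLabel_echo hmax hα
  have hinj' := fun p => injOn_incidencePair_labelEdgeColor (a := a) (hinj p)
  refine ⟨fun v => (lab v).2, G.labelEdgeColor r lab a, fun σ hV hE =>
    σ.eq_self_of_injOn_bfsChildren hconn ?_ hV hE hinj'⟩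
  by_contra hσr
  refine not_injOn_incidencePair_labelEdgeColor hconn hecho hσr
    (by rwa [σ.ncard_neighborSet_apply]) (σ.injOn_incidencePair_apply hV hE ?_)
  rw [← bfsChildren_root hconn]
  exact hinj' r

theorem exists_isTotalDistinguishing (hconn : G.Connected)
    (hmax : ∀ v, (G.neighborSet v).ncard ≤ (G.neighborSet r).ncard)
    (h2 : 2 ≤ (G.neighborSet r).ncard) (hα : (G.neighborSet r).ncard ≤ Nat.card α ^ 2) :
    ∃ (cV : V → α) (cE : Sym2 V → α), G.IsTotalDistinguishing cV cE := by
  have hcard : 1 < Nat.card α := by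
    by_contra! h
    nlinarith
  obtain ⟨a₀, a₁, hne⟩ := (Finite.one_lt_card_iff_nontrivial.mp hcard).exists_pair_ne
  rcases le_or_gt (G.neighborSet r).ncard (Nat.card α + 1) with hsmall | hlarge
  · exact exists_isTotalDistinguishing_of_le_card_add_one hconn hmax h2 hsmall hne
  · exact exists_isTotalDistinguishing_of_card_add_one_lt hconn hmax hα hlarge a₀

end Construction

end SimpleGraph

section CentralGraph

variable {V : Type*} {G : SimpleGraph V}

theorem ncard_neighborSet_centralGraph_inr (e : G.edgeSet) :
    ((centralGraph G).neighborSet (Sum.inr e)).ncard = 2 := by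
  obtain ⟨e, he⟩ := e
  induction e using Sym2.ind with
  | _ a b =>
  have hnbhd : (centralGraph G).neighborSet (Sum.inr ⟨s(a, b), he⟩) = {Sum.inl a, Sum.inl b} := by
    ext (u | f)
    · change u ∈ s(a, b) ↔ _
      simp
    · change False ↔ _
      simp
  rw [hnbhd, ncard_pair (by simpa using G.ne_of_adj he)]

theorem card_sub_one_le_ncard_neighborSet_centralGraph_inl [Finite V] (u : V) :
    Nat.card V - 1 ≤ ((centralGraph G).neighborSet (Sum.inl u)).ncard := by
  classical
  -- `v ≠ u` is a neighbour of `u` in `C(G)` itself, or through the subdivision vertex of `uv`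
  let f : V → V ⊕ G.edgeSet := fun v => if h : G.Adj u v then Sum.inr ⟨s(u, v), h⟩ else Sum.inl v
  have hf : ∀ v ∈ ({u}ᶜ : Set V), f v ∈ (centralGraph G).neighborSet (Sum.inl u) := fun v hv => by
    by_cases h : G.Adj u v
    · simp only [f, dif_pos h]
      exact Sym2.mem_mk_left u v
    · simp only [f, dif_neg h]
      exact ⟨Ne.symm hv, h⟩
  have hinj : InjOn f ({u}ᶜ : Set V) := fun v _ w _ hvw => by
    by_cases hv : G.Adj u v <;> by_cases hw : G.Adj u w <;> simp_all [f, Subtype.ext_iff]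
  have := ncard_le_ncard_of_injOn f hf hinj
  rwa [ncard_compl, ncard_singleton] at this

theorem centralGraph_exists_apply_inl_eq [Finite V] (hn : 4 ≤ Nat.card V)
    (φ : centralGraph G ≃g centralGraph G) (u : V) : ∃ w, φ (Sum.inl u) = Sum.inl w := by
  rcases h : φ (Sum.inl u) with w | e
  · exact ⟨w, rfl⟩
  · have hdeg := φ.ncard_neighborSet_apply (Sum.inl u)
    rw [h, ncard_neighborSet_centralGraph_inr] at hdeg
    have := card_sub_one_le_ncard_neighborSet_centralGraph_inl (G := G) u
    omega

theorem exists_iso_of_centralGraph_iso [Finite V] (hn : 4 ≤ Nat.card V)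
    (φ : centralGraph G ≃g centralGraph G) :
    ∃ σ : G ≃g G, ∀ u, φ (Sum.inl u) = Sum.inl (σ u) := by
  choose f hf using centralGraph_exists_apply_inl_eq hn φ
  choose g hg using centralGraph_exists_apply_inl_eq hn φ.symm
  have hgf : ∀ u, g (f u) = u := fun u => Sum.inl_injective (by rw [← hg, ← hf, φ.symm_apply_apply])
  have hfg : ∀ u, f (g u) = u := fun u => Sum.inl_injective (by rw [← hf, ← hg, φ.apply_symm_apply])
  refine ⟨⟨⟨f, g, hgf, hfg⟩, fun {u v} => ?_⟩, hf⟩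
  have hadj := φ.map_adj_iff (v := Sum.inl u) (w := Sum.inl v)
  rw [hf, hf] at hadj
  change f u ≠ f v ∧ ¬ G.Adj (f u) (f v) ↔ u ≠ v ∧ ¬ G.Adj u v at hadj
  have hfuv : f u = f v ↔ u = v := ⟨fun h => by rw [← hgf u, h, hgf], congrArg f⟩
  by_cases huv : u = v
  · subst huv
    simp
  · exact not_iff_not.mp (by simpa [huv, hfuv] using hadj)

theorem centralGraph_apply_inr (φ : centralGraph G ≃g centralGraph G) (σ : G ≃g G)
    (hσ : ∀ u, φ (Sum.inl u) = Sum.inl (σ u)) (e : G.edgeSet) :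
    φ (Sum.inr e) = Sum.inr (σ.mapEdgeSet e) := by
  obtain ⟨e, he⟩ := e
  induction e using Sym2.ind with
  | _ a b =>
  obtain ⟨f, hf⟩ : ∃ f, φ (Sum.inr ⟨s(a, b), he⟩) = Sum.inr f := by
    rcases h : φ (Sum.inr ⟨s(a, b), he⟩) with w | f
    · obtain ⟨u, rfl⟩ := σ.surjective w
      exact absurd (φ.injective (h.trans (hσ u).symm)) Sum.inr_ne_inl
    · exact ⟨f, rfl⟩
  have hmem : ∀ x ∈ s(a, b), σ x ∈ (f : Sym2 V) := fun x hx => by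
    have := φ.map_adj_iff.mpr
      (show (centralGraph G).Adj (Sum.inl x) (Sum.inr ⟨s(a, b), he⟩) from hx)
    rwa [hσ, hf] at this
  rw [hf, Sum.inr.injEq, Subtype.ext_iff, Iso.mapEdgeSet_apply]
  exact (Sym2.mem_and_mem_iff (σ.injective.ne (G.ne_of_adj he))).mp
    ⟨hmem a (Sym2.mem_mk_left _ _), hmem b (Sym2.mem_mk_right _ _)⟩

theorem distinguishingNumber_centralGraph_le [Finite V] (hn : 4 ≤ Nat.card V) {d : ℕ}
    {cV : V → Fin d} {cE : Sym2 V → Fin d} (h : G.IsTotalDistinguishing cV cE) :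
    distinguishingNumber (centralGraph G) ≤ d := by
  refine Nat.sInf_le ⟨Sum.elim cV fun e => cE e, fun φ hφ => ?_⟩
  obtain ⟨σ, hσ⟩ := exists_iso_of_centralGraph_iso hn φ
  have hσ_id : ∀ v, σ v = v := h σ (fun v => by simpa [hσ] using hφ (Sum.inl v))
    fun u v huv => by simpa [centralGraph_apply_inr φ σ hσ] using hφ (Sum.inr ⟨s(u, v), huv⟩)
  rintro (u | e)
  · rw [hσ, hσ_id]
  · rw [centralGraph_apply_inr φ σ hσ]
    simp [Subtype.ext_iff, hσ_id]

end CentralGraph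

section MaxDegree

variable {V : Type*} [Finite V] (G : SimpleGraph V)

theorem bddAbove_ncard_neighborSet : BddAbove {k | ∃ v : V, k = (G.neighborSet v).ncard} :=
  ⟨Nat.card V, by rintro _ ⟨v, rfl⟩; exact ncard_le_card _⟩

theorem ncard_neighborSet_le_maxDeg (v : V) : (G.neighborSet v).ncard ≤ maxDeg G :=
  le_csSup (bddAbove_ncard_neighborSet G) ⟨v, rfl⟩

theorem exists_ncard_neighborSet_eq_maxDeg [Nonempty V] :
    ∃ r, (G.neighborSet r).ncard = maxDeg G := by
  obtain ⟨r, hr⟩ := Nat.sSup_mem (s := {k | ∃ v : V, k = (G.neighborSet v).ncard})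
    ⟨_, Classical.arbitrary V, rfl⟩ (bddAbove_ncard_neighborSet G)
  exact ⟨r, hr.symm⟩

end MaxDegree

/-- For a connected graph `G` of order at least `4`,
`D(C(G)) ≤ ⌈√Δ(G)⌉`. -/
theorem stmt_7 {V : Type*} [Fintype V] (G : SimpleGraph V)
    (hconn : G.Connected) (hn : 4 ≤ Fintype.card V) :
    distinguishingNumber (centralGraph G) ≤ ⌈Real.sqrt (maxDeg G)⌉₊ := by
  rw [← Nat.card_eq_fintype_card] at hn
  have : Nonempty V := Nat.card_pos_iff.mp (by omega) |>.1
  obtain ⟨r, hr⟩ := exists_ncard_neighborSet_eq_maxDeg G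
  obtain ⟨v, hv⟩ := hconn.exists_two_le_ncard_neighborSet (by omega)
  obtain ⟨cV, cE, hdist⟩ := exists_isTotalDistinguishing (α := Fin ⌈Real.sqrt (maxDeg G)⌉₊) hconn
    (r := r) (hr ▸ ncard_neighborSet_le_maxDeg G) (hr ▸ hv.trans (ncard_neighborSet_le_maxDeg G v))
    (by rw [hr, Nat.card_fin]; exact Nat.le_ceil_sqrt_sq _)
  exact distinguishingNumber_centralGraph_le hn hdist
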